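/- Let f ∈ ℚ[u, z] be a polynomial in two variables, and let m be a natural number. Then the coefficient of r^m in f(ur+2, zr+2) + f(ur−2, zr−2) − 2 f(ur, zr) equals ∑_{k ≥ m+2, k ≡ m (mod 2)} 2^{1+k−m} ∑_{p+q=k} φ_{p,q,m}(u,z) · c_{p,q}, where c_{p,q} is the coefficient of u^p z^q in f(u,z) and φ_{p,q,m}(u,z) := ∑_{i+j=m, i≤p, j≤q} C(p,i) C(q,j) u^i z^j. -/

import Mathlib

/-!
Both sides are `ℚ`-linear in `f`, so it suffices to treat a monomial `c u^p z^q`. Substituting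
`u ↦ ur + β`, `z ↦ zr + β` and extracting the coefficient of `r^m` gives
`c β^(p+q-m) φ_{p,q,m}` (binomial theorem in each variable), so the shifted second difference
carries the factor `2^n + (-2)^n - 2·0^n` with `n = p + q - m`: this is `2^(n+1)` when `n` is
even and positive, and `0` otherwise.
-/

open Finset

/-- The polynomial `φ_{p,q,m}(u,z) = ∑_{i+j=m, i≤p, j≤q} C(p,i) C(q,j) u^i z^j`,
with `u = X 0`, `z = X 1` (the conditions `i ≤ p`, `j ≤ q` are enforced by the
vanishing of the binomial coefficients). -/
noncomputable def phiPoly (p q m : ℕ) : MvPolynomial (Fin 2) ℚ :=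
  ∑ ij ∈ Finset.HasAntidiagonal.antidiagonal m,
    MvPolynomial.C ((p.choose ij.1 : ℚ) * (q.choose ij.2 : ℚ))
      * MvPolynomial.X 0 ^ ij.1 * MvPolynomial.X 1 ^ ij.2

theorem Polynomial.coeff_C_mul_X_add_C_pow {S : Type*} [CommSemiring S] (a b : S) (p i : ℕ) :
    ((C a * X + C b) ^ p).coeff i = p.choose i * a ^ i * b ^ (p - i) := by
  have hterm : ∀ k, (C a * X) ^ k * C b ^ (p - k) * (p.choose k : Polynomial S) =
      C (p.choose k * a ^ k * b ^ (p - k)) * X ^ k := fun k => by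
    simp only [mul_pow, ← C_pow, ← C_eq_natCast, C_mul]; ring
  simp only [add_pow, finsetSum_coeff, hterm, coeff_C_mul_X_pow, sum_ite_eq, mem_range]
  split_ifs with hi
  · rfl
  · rw [Nat.choose_eq_zero_of_lt (by omega), Nat.cast_zero, zero_mul, zero_mul]

theorem MvPolynomial.eq_sum_range_antidiagonal_monomial {R : Type*} [CommSemiring R]
    (f : MvPolynomial (Fin 2) R) {N : ℕ} (hN : f.totalDegree ≤ N) :
    f = ∑ k ∈ range (N + 1), ∑ pq ∈ antidiagonal k,
      monomial (Finsupp.single 0 pq.1 + Finsupp.single 1 pq.2)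
        (coeff (Finsupp.single 0 pq.1 + Finsupp.single 1 pq.2) f) := by
  ext d
  obtain ⟨p, q, rfl⟩ : ∃ p q, d = Finsupp.single 0 p + Finsupp.single 1 q :=
    ⟨d 0, d 1, by ext i; fin_cases i <;> simp⟩
  have hinj : ∀ pq : ℕ × ℕ, Finsupp.single (0 : Fin 2) pq.1 + Finsupp.single 1 pq.2 =
      Finsupp.single 0 p + Finsupp.single 1 q ↔ (p, q) = pq := by
    simp [Finsupp.ext_iff, Fin.forall_fin_two, Prod.ext_iff, eq_comm]
  simp only [coeff_sum, coeff_monomial, hinj, sum_ite_eq, HasAntidiagonal.mem_antidiagonal,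
    mem_range]
  refine (ite_eq_left_iff.2 fun hdeg => ?_).symm
  by_contra hne
  have hle := le_totalDegree (mem_support_iff.2 (Ne.symm hne))
  rw [Finsupp.sum_add_index' (fun _ => rfl) (fun _ _ _ => rfl), Finsupp.sum_single_index rfl,
    Finsupp.sum_single_index rfl] at hle
  omega

theorem two_pow_add_neg_two_pow_sub_two_mul_zero_pow {R : Type*} [CommRing R] (n : ℕ) :
    (2 : R) ^ n + (-2) ^ n - 2 * 0 ^ n = if n ≠ 0 ∧ Even n then 2 ^ (n + 1) else 0 := by
  rcases n.even_or_odd with h | h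
  · rcases eq_or_ne n 0 with rfl | hn
    · norm_num
    · rw [h.neg_pow, zero_pow hn, if_pos ⟨hn, h⟩]; ring
  · rw [h.neg_pow, zero_pow h.pos.ne', if_neg fun hc => Nat.not_even_iff_odd.2 h hc.2]; ring

section AffineShift

open MvPolynomial

/-- The substitution `u ↦ u r + β`, `z ↦ z r + β`, with `r` the variable of the outer
polynomial ring. -/
noncomputable def affineShift (β : ℚ) : Fin 2 → Polynomial (MvPolynomial (Fin 2) ℚ) :=
  fun i => Polynomial.C (X i) * Polynomial.X + Polynomial.C (C β)

theorem coeff_aeval_affineShift_monomial (β c : ℚ) (p q m : ℕ) :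
    (aeval (affineShift β) (monomial (Finsupp.single 0 p + Finsupp.single 1 q) c)).coeff m =
      C (c * β ^ (p + q - m)) * phiPoly p q m := by
  rw [aeval_monomial, Finsupp.prod_add_index' (fun _ => pow_zero _) (fun _ _ _ => pow_add _ _ _),
    Finsupp.prod_single_index (by simp), Finsupp.prod_single_index (by simp),
    Polynomial.algebraMap_apply, algebraMap_eq, Polynomial.coeff_C_mul, Polynomial.coeff_mul,
    phiPoly, mul_sum, mul_sum]
  refine sum_congr rfl fun ij hij => ?_
  rw [HasAntidiagonal.mem_antidiagonal] at hij
  simp only [affineShift, Polynomial.coeff_C_mul_X_add_C_pow]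
  by_cases hle : ij.1 ≤ p ∧ ij.2 ≤ q
  · rw [show p + q - m = (p - ij.1) + (q - ij.2) by omega]
    simp only [pow_add, map_mul, map_pow, map_natCast]
    ring
  · rcases not_and_or.mp hle with hlt | hlt <;> simp [Nat.choose_eq_zero_of_lt (not_le.mp hlt)]

theorem coeff_affineShift_second_difference_monomial (p q m : ℕ) (c : ℚ) :
    (aeval (affineShift 2) (monomial (Finsupp.single 0 p + Finsupp.single 1 q) c)
      + aeval (affineShift (-2)) (monomial (Finsupp.single 0 p + Finsupp.single 1 q) c)
      - 2 * aeval (affineShift 0) (monomial (Finsupp.single 0 p + Finsupp.single 1 q) c)).coeff m =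
      if m + 2 ≤ p + q ∧ Even (p + q - m) then
        C (2 ^ (1 + (p + q) - m) * c) * phiPoly p q m
      else 0 := by
  have hcond : (p + q - m ≠ 0 ∧ Even (p + q - m)) ↔ (m + 2 ≤ p + q ∧ Even (p + q - m)) :=
    and_congr_left fun ⟨r, hr⟩ => by omega
  calc _ = C (c * (2 ^ (p + q - m) + (-2) ^ (p + q - m) - 2 * 0 ^ (p + q - m)))
        * phiPoly p q m := by
        simp only [Polynomial.coeff_sub, Polynomial.coeff_add, Polynomial.coeff_ofNat_mul,
          coeff_aeval_affineShift_monomial, map_mul, map_add, map_sub, map_ofNat]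
        ring
    _ = _ := by
        rw [two_pow_add_neg_two_pow_sub_two_mul_zero_pow]
        simp only [hcond]
        split_ifs with h
        · rw [mul_comm c, show 1 + (p + q) - m = p + q - m + 1 by omega]
        · rw [mul_zero, map_zero, zero_mul]

end AffineShift

/-- Two-variable coefficient extraction identity from the proof of Theorem 5.2:
for `f ∈ ℚ[u,z]` (variable `0` = first slot, variable `1` = second slot),
the coefficient of `r^m` in `f(ur+2, zr+2) + f(ur−2, zr−2) − 2 f(ur, zr)`
equals `∑_{k ≥ m+2, k ≡ m (2)} 2^{1+k−m} ∑_{p+q=k} φ_{p,q,m}(u,z) c_{p,q}`,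
where `c_{p,q}` is the coefficient of `u^p z^q` in `f(u,z)`.  The sum over `k`
is truncated at the total degree of `f`, beyond which all `c_{p,q}` with
`p + q = k` vanish. -/
theorem coeff_extraction_shifted_bipartite (f : MvPolynomial (Fin 2) ℚ) (m : ℕ) :
    (Polynomial.coeff
        (MvPolynomial.aeval
            ![Polynomial.C (MvPolynomial.X 0) * Polynomial.X + 2,
              Polynomial.C (MvPolynomial.X 1) * Polynomial.X + 2] f
          + MvPolynomial.aeval
            ![Polynomial.C (MvPolynomial.X 0) * Polynomial.X - 2,
              Polynomial.C (MvPolynomial.X 1) * Polynomial.X - 2] f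
          - 2 * MvPolynomial.aeval
            ![Polynomial.C (MvPolynomial.X 0) * Polynomial.X,
              Polynomial.C (MvPolynomial.X 1) * Polynomial.X] f) m) =
      ∑ k ∈ Finset.range (f.totalDegree + 1),
        if m + 2 ≤ k ∧ Even (k - m) then
          ∑ pq ∈ Finset.HasAntidiagonal.antidiagonal k,
            MvPolynomial.C
                ((2 : ℚ) ^ (1 + k - m) *
                  MvPolynomial.coeff
                    (Finsupp.single (0 : Fin 2) pq.1 +
                      Finsupp.single (1 : Fin 2) pq.2) f)
              * phiPoly pq.1 pq.2 m
        else 0 := by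
  have hplus : ![Polynomial.C (MvPolynomial.X 0) * Polynomial.X + 2,
      Polynomial.C (MvPolynomial.X 1) * Polynomial.X + 2] = affineShift 2 := by
    funext i; fin_cases i <;> simp [affineShift, map_ofNat]
  have hminus : ![Polynomial.C (MvPolynomial.X 0) * Polynomial.X - 2,
      Polynomial.C (MvPolynomial.X 1) * Polynomial.X - 2] = affineShift (-2) := by
    funext i; fin_cases i <;> simp [affineShift, sub_eq_add_neg, map_ofNat]
  have hzero : ![Polynomial.C (MvPolynomial.X 0) * Polynomial.X,
      Polynomial.C (MvPolynomial.X 1) * Polynomial.X] = affineShift 0 := by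
    funext i; fin_cases i <;> simp [affineShift]
  rw [hplus, hminus, hzero]
  conv_lhs => rw [MvPolynomial.eq_sum_range_antidiagonal_monomial f le_rfl]
  simp only [map_sum, mul_sum, ← sum_add_distrib, ← sum_sub_distrib, Polynomial.finsetSum_coeff,
    coeff_affineShift_second_difference_monomial]
  refine sum_congr rfl fun k _ => ?_
  split_ifs with h
  · exact sum_congr rfl fun pq hpq => by
      rw [HasAntidiagonal.mem_antidiagonal.1 hpq, if_pos h]
  · exact sum_eq_zero fun pq hpq => by
      rw [HasAntidiagonal.mem_antidiagonal.1 hpq, if_neg h]
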